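/- Let l ≥ 2, let m be the Haar probability (uniform) measure on G_l = (ℤ/2ℤ)^l, and let λ > 0. The generalized Poisson distribution Π_{λm} with spectral measure λm belongs to TEC(G_l) if and only if λ < ln 3. -/

import Mathlib

open scoped BigOperators

/-- The group `G_l = (ℤ/2ℤ)^l`. -/
abbrev Gl (l : ℕ) : Type := Fin l → ZMod 2

/-- The character pairing `(x,y) = (-1)^(Σᵢ xᵢyᵢ)`. -/
noncomputable def pairingL {l : ℕ} (x y : Gl l) : ℝ :=
  (-1 : ℝ) ^ (∑ i : Fin l, (x i).val * (y i).val)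

/-- A probability measure on `G_l`, given by its mass function. -/
def IsProbL {l : ℕ} (p : Gl l → ℝ) : Prop := (∀ x, 0 ≤ p x) ∧ ∑ x : Gl l, p x = 1

/-- The characteristic function `μ̂(y) = Σ_x (x,y) μ({x})`. -/
noncomputable def charFnL {l : ℕ} (p : Gl l → ℝ) (y : Gl l) : ℝ :=
  ∑ x : Gl l, pairingL x y * p x

/-- `μ` has a trivial equivalence class: every probability measure `ν` with
`|ν̂| = |μ̂|` is a shift `μₓ` of `μ` (central symmetry is the identity on `G_l`). -/
def TECl {l : ℕ} (p : Gl l → ℝ) : Prop :=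
  ∀ q : Gl l → ℝ, IsProbL q → (∀ y : Gl l, |charFnL q y| = |charFnL p y|) →
    ∃ x : Gl l, ∀ e : Gl l, q e = p (e + x)

/-!
Write `c = e^{-λ}`, so that `Π̂(y)` is `1` at `y = 0` and `c` elsewhere. If `|ν̂| = |Π̂|`
then `ν̂ = ε Π̂` for a sign function `ε`, and `ν` is a shift of `Π` exactly when `ε` is a
character.

If `c ≤ 1/3`, flipping the sign of `Π̂` at one nonzero point still gives the transform of a
probability measure, and since `G_l` has more than two elements this sign function is not a
character. If `c > 1/3`, the inversion formula `2^l ν(x) = c ε̂(x) + 1 - c` and `ν ≥ 0` give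
`ε̂ > -2`; as `ε̂` takes even integer values, `ε̂ ≥ 0`, and a sign function with nonnegative
Fourier transform is a character.
-/

open Finset

section Pairing

variable {l : ℕ}

lemma Gl.card_eq (l : ℕ) : Fintype.card (Gl l) = 2 ^ l := by simp

lemma Gl.neg_eq_self (x : Gl l) : -x = x := funext fun i => ZMod.neg_eq_self_mod_two (x i)

lemma neg_one_pow_val_add {R : Type*} [Ring R] (a b : ZMod 2) :
    (-1 : R) ^ (a + b).val = (-1) ^ a.val * (-1) ^ b.val := by
  rw [ZMod.val_add, ← neg_one_pow_eq_pow_mod_two, pow_add]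

lemma pairingL_eq_neg_one_pow_val_dotProduct (x y : Gl l) :
    pairingL x y = (-1) ^ (x ⬝ᵥ y).val := by
  rw [pairingL, neg_one_pow_eq_pow_mod_two, ← ZMod.val_natCast 2]
  simp [dotProduct]

lemma pairingL_comm (x y : Gl l) : pairingL x y = pairingL y x := by
  simp only [pairingL_eq_neg_one_pow_val_dotProduct, dotProduct_comm]

lemma pairingL_zero_left (y : Gl l) : pairingL 0 y = 1 := by
  simp [pairingL_eq_neg_one_pow_val_dotProduct]

lemma pairingL_zero_right (x : Gl l) : pairingL x 0 = 1 := by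
  rw [pairingL_comm, pairingL_zero_left]

lemma pairingL_add_left (x z y : Gl l) : pairingL (x + z) y = pairingL x y * pairingL z y := by
  simp only [pairingL_eq_neg_one_pow_val_dotProduct, add_dotProduct, neg_one_pow_val_add]

lemma pairingL_add_right (x y z : Gl l) : pairingL x (y + z) = pairingL x y * pairingL x z := by
  simp only [pairingL_comm x, pairingL_add_left]

lemma pairingL_eq_one_or_eq_neg_one (x y : Gl l) : pairingL x y = 1 ∨ pairingL x y = -1 :=
  neg_one_pow_eq_or ℝ _

lemma pairingL_mul_self (x y : Gl l) : pairingL x y * pairingL x y = 1 := by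
  rcases pairingL_eq_one_or_eq_neg_one x y with h | h <;> simp [h]

noncomputable def pairingChar (y : Gl l) : AddChar (Gl l) ℝ where
  toFun x := pairingL x y
  map_zero_eq_one' := pairingL_zero_left y
  map_add_eq_mul' x z := pairingL_add_left x z y

lemma pairingChar_apply (x y : Gl l) : pairingChar y x = pairingL x y := rfl

lemma pairingChar_eq_zero_iff (y : Gl l) : pairingChar y = 0 ↔ y = 0 := by
  refine ⟨fun h => ?_, ?_⟩
  · by_contra hy
    obtain ⟨i, hi⟩ := Function.ne_iff.mp hy
    have hval : (y i).val = 1 := by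
      have := ZMod.val_lt (y i); have := (ZMod.val_ne_zero (y i)).mpr hi; omega
    have hsingle := congrArg (· (Pi.single i 1)) h
    norm_num [pairingChar_apply, pairingL_eq_neg_one_pow_val_dotProduct, single_dotProduct,
      hval] at hsingle
  · rintro rfl
    exact AddChar.ext_iff.mpr fun x => by simp [pairingChar_apply, pairingL_zero_right]

lemma sum_pairingL_left (y : Gl l) : ∑ x, pairingL x y = if y = 0 then 2 ^ l else 0 := by
  simpa only [pairingChar_apply, pairingChar_eq_zero_iff, Gl.card_eq, Nat.cast_pow, Nat.cast_ofNat]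
    using (pairingChar y).sum_eq_ite

lemma sum_pairingL_mul_pairingL (x z : Gl l) :
    ∑ y, pairingL y x * pairingL y z = if x = z then 2 ^ l else 0 := by
  simp_rw [← pairingL_add_right, sum_pairingL_left, add_eq_zero_iff_eq_neg, Gl.neg_eq_self]

end Pairing

section Fourier

variable {l : ℕ}

lemma charFnL_zero (f : Gl l → ℝ) : charFnL f 0 = ∑ x, f x := by
  simp [charFnL, pairingL_zero_right]

lemma sum_pairingL_mul_charFnL (f : Gl l → ℝ) (x : Gl l) :
    ∑ y, pairingL x y * charFnL f y = 2 ^ l * f x := by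
  calc ∑ y, pairingL x y * charFnL f y
        = ∑ z, (∑ y, pairingL y x * pairingL y z) * f z := by
        simp_rw [charFnL, mul_sum, sum_mul]
        rw [sum_comm]
        refine sum_congr rfl fun z _ => sum_congr rfl fun y _ => ?_
        rw [pairingL_comm x y, pairingL_comm z y, mul_assoc]
    _ = 2 ^ l * f x := by simp [sum_pairingL_mul_pairingL]

lemma charFnL_injective : Function.Injective (charFnL : (Gl l → ℝ) → Gl l → ℝ) := by
  intro f g h
  funext x
  have := sum_pairingL_mul_charFnL f x
  rw [h, sum_pairingL_mul_charFnL] at this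
  exact (mul_left_cancel₀ (by positivity) this).symm

lemma sum_charFnL (f : Gl l → ℝ) : ∑ y, charFnL f y = 2 ^ l * f 0 := by
  simpa [pairingL_zero_left] using sum_pairingL_mul_charFnL f 0

lemma sum_charFnL_sq (f : Gl l → ℝ) : ∑ y, charFnL f y ^ 2 = 2 ^ l * ∑ x, f x ^ 2 := by
  calc ∑ y, charFnL f y ^ 2 = ∑ x, f x * ∑ y, pairingL x y * charFnL f y := by
        simp_rw [sq, mul_sum, charFnL, sum_mul]
        rw [sum_comm]
        exact sum_congr rfl fun _ _ => sum_congr rfl fun _ _ => by ring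
    _ = 2 ^ l * ∑ x, f x ^ 2 := by
        simp_rw [sum_pairingL_mul_charFnL, mul_sum]
        exact sum_congr rfl fun _ _ => by ring

lemma charFnL_comp_add_right (f : Gl l → ℝ) (x y : Gl l) :
    charFnL (fun e => f (e + x)) y = pairingL x y * charFnL f y := by
  calc charFnL (fun e => f (e + x)) y
        = pairingL x y * ∑ e, pairingL (e + x) y * f (e + x) := by
        rw [charFnL, mul_sum]
        refine sum_congr rfl fun e _ => ?_
        rw [pairingL_add_left, ← mul_assoc, mul_comm (pairingL x y), mul_assoc (pairingL e y),
          pairingL_mul_self, mul_one]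
    _ = pairingL x y * charFnL f y :=
        congrArg _ (Equiv.sum_comp (Equiv.addRight x) fun e => pairingL e y * f e)

end Fourier

section SignFunctions

lemma exists_sum_eq_card_add_two_mul {ι : Type*} [DecidableEq ι] (s : Finset ι) {f : ι → ℝ}
    (hf : ∀ i ∈ s, f i = 1 ∨ f i = -1) : ∃ k : ℤ, ∑ i ∈ s, f i = #s + 2 * k := by
  induction s using Finset.induction_on with
  | empty => exact ⟨0, by simp⟩
  | insert a s ha ih =>
    obtain ⟨k, hk⟩ := ih fun i hi => hf i (mem_insert_of_mem hi)
    rw [sum_insert ha, card_insert_of_notMem ha, hk]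
    rcases hf a (mem_insert_self a s) with h | h
    · exact ⟨k, by rw [h]; push_cast; ring⟩
    · exact ⟨k - 1, by rw [h]; push_cast; ring⟩

lemma eq_one_of_card_le_sum {ι : Type*} (s : Finset ι) {f : ι → ℝ}
    (hf : ∀ i ∈ s, f i ≤ 1) (hs : #s ≤ ∑ i ∈ s, f i) : ∀ i ∈ s, f i = 1 := by
  refine (sum_eq_sum_iff_of_le hf).mp (le_antisymm (sum_le_sum hf) ?_)
  simpa using hs

variable {l : ℕ} {ε : Gl l → ℝ}

lemma pairingL_mul_eq_one_or_eq_neg_one (hε : ∀ y, ε y = 1 ∨ ε y = -1) (x y : Gl l) :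
    pairingL x y * ε x = 1 ∨ pairingL x y * ε x = -1 := by
  rcases pairingL_eq_one_or_eq_neg_one x y with h | h <;> rcases hε x with h' | h' <;>
    simp [h, h']

/-- The Fourier coefficients of a sign function are even integers. -/
lemma charFnL_nonneg_of_neg_two_lt (hl : 1 ≤ l) (hε : ∀ y, ε y = 1 ∨ ε y = -1) {x : Gl l}
    (hx : -2 < charFnL ε x) : 0 ≤ charFnL ε x := by
  obtain ⟨k, hk⟩ := exists_sum_eq_card_add_two_mul univ fun y _ =>
    pairingL_mul_eq_one_or_eq_neg_one hε y x
  obtain ⟨m, hm⟩ : ∃ m : ℕ, 2 ^ l = 2 * m :=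
    ⟨2 ^ (l - 1), by rw [← pow_succ']; congr 1; omega⟩
  rw [charFnL, hk, card_univ, Gl.card_eq, hm] at hx ⊢
  have : (-2 : ℤ) < 2 * m + 2 * k := by exact_mod_cast hx
  have : (0 : ℤ) ≤ 2 * m + 2 * k := by omega
  exact_mod_cast this

/-- Parseval forces the Fourier transform to be concentrated at a single point. -/
theorem exists_pairingL_eq_of_charFnL_nonneg (hε : ∀ y, ε y = 1 ∨ ε y = -1)
    (hF : ∀ x, 0 ≤ charFnL ε x) : ∃ x₀, ∀ y, ε y = pairingL x₀ y := by
  obtain ⟨x₀, -, hx₀⟩ := exists_max_image univ (charFnL ε) univ_nonempty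
  have hε_sq : ∀ y, ε y ^ 2 = 1 := fun y => by rcases hε y with h | h <;> simp [h]
  have hε0 : ε 0 ≤ 1 := by rcases hε 0 with h | h <;> simp [h]
  have hpow : (0 : ℝ) < 2 ^ l := by positivity
  have hmax : 2 ^ l ≤ charFnL ε x₀ := by
    refine le_of_mul_le_mul_right ?_ hpow
    calc (2 : ℝ) ^ l * 2 ^ l = ∑ x, charFnL ε x ^ 2 := by
          simp [sum_charFnL_sq, hε_sq]
      _ ≤ ∑ x, charFnL ε x₀ * charFnL ε x := by
          refine sum_le_sum fun x _ => ?_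
          rw [sq]
          exact mul_le_mul_of_nonneg_right (hx₀ x (mem_univ x)) (hF x)
      _ = charFnL ε x₀ * (2 ^ l * ε 0) := by rw [← mul_sum, sum_charFnL]
      _ ≤ charFnL ε x₀ * 2 ^ l := by
          gcongr
          · exact hF x₀
          · exact mul_le_of_le_one_right hpow.le hε0
  have hterms := eq_one_of_card_le_sum univ (f := fun y => pairingL y x₀ * ε y)
    (fun y _ => by rcases pairingL_mul_eq_one_or_eq_neg_one hε y x₀ with h | h <;> linarith)
    (by rw [card_univ, Gl.card_eq]; exact_mod_cast hmax)
  refine ⟨x₀, fun y => ?_⟩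
  have h := hterms y (mem_univ y)
  calc ε y = pairingL y x₀ * (pairingL y x₀ * ε y) := by
        rw [← mul_assoc, pairingL_mul_self, one_mul]
    _ = pairingL x₀ y := by rw [h, mul_one, pairingL_comm]

end SignFunctions

section Shifts

variable {l : ℕ}

lemma exists_comp_add_right_iff {p q ε : Gl l → ℝ} (hp : ∀ y, charFnL p y ≠ 0)
    (hq : ∀ y, charFnL q y = ε y * charFnL p y) :
    (∃ x, ∀ e, q e = p (e + x)) ↔ ∃ x, ∀ y, ε y = pairingL x y := by
  refine exists_congr fun x => ⟨fun h y => ?_, fun h e => ?_⟩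
  · refine mul_right_cancel₀ (hp y) ?_
    rw [← hq, ← charFnL_comp_add_right, funext h]
  · have hqp : q = fun e => p (e + x) :=
      charFnL_injective (funext fun y => by rw [hq, h, charFnL_comp_add_right])
    exact congrFun hqp e

lemma Gl.exists_ne_zero_ne (hl : 2 ≤ l) (y₀ : Gl l) : ∃ y, y ≠ 0 ∧ y ≠ y₀ := by
  have hcard : #({0, y₀} : Finset (Gl l)) < #(univ : Finset (Gl l)) := by
    calc #({0, y₀} : Finset (Gl l)) ≤ 2 := card_le_two
      _ < 2 ^ l := by
        calc 2 < 2 ^ 2 := by norm_num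
          _ ≤ 2 ^ l := Nat.pow_le_pow_right two_pos hl
      _ = #univ := by rw [card_univ, Gl.card_eq]
  obtain ⟨y, -, hy⟩ := exists_mem_notMem_of_card_lt_card hcard
  simp only [mem_insert, mem_singleton, not_or] at hy
  exact ⟨y, hy⟩

lemma not_exists_pairingL_eq_ite (hl : 2 ≤ l) (y₀ : Gl l) :
    ¬ ∃ x, ∀ y, (if y = y₀ then -1 else 1) = pairingL x y := by
  rintro ⟨x, hx⟩
  obtain ⟨y₁, hy₁, hy₁₀⟩ := Gl.exists_ne_zero_ne hl y₀
  have h₀ := hx y₀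
  have h₁ := hx y₁
  have h₀₁ := hx (y₀ + y₁)
  rw [if_pos rfl] at h₀
  rw [if_neg hy₁₀] at h₁
  rw [if_neg (by rwa [add_eq_left]), pairingL_add_right, ← h₀, ← h₁] at h₀₁
  norm_num at h₀₁

end Shifts

section Poisson

variable {l : ℕ} {c : ℝ} {p : Gl l → ℝ}

lemma charFnL_ne_zero_of_eq_ite (hc : c ≠ 0) (hp : ∀ y, charFnL p y = if y = 0 then 1 else c)
    (y : Gl l) : charFnL p y ≠ 0 := by
  rw [hp]
  split_ifs
  exacts [one_ne_zero, hc]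

lemma two_pow_mul_eq_of_charFnL_eq {q ε : Gl l → ℝ}
    (hq : ∀ y, charFnL q y = ε y * if y = 0 then 1 else c) (x : Gl l) :
    2 ^ l * q x = c * charFnL ε x + (1 - c) * ε 0 := by
  have hsplit : ∀ y, pairingL x y * charFnL q y
      = c * (pairingL y x * ε y) + (1 - c) * if y = 0 then ε 0 else 0 := fun y => by
    rw [hq, pairingL_comm]
    split_ifs with h
    · rw [h, pairingL_zero_left]; ring
    · ring
  rw [← sum_pairingL_mul_charFnL, sum_congr rfl fun y _ => hsplit y, sum_add_distrib, ← mul_sum,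
    ← mul_sum, charFnL, sum_ite_eq']
  simp

theorem TECl_of_inv_three_lt (hl : 1 ≤ l) (hc : 3⁻¹ < c)
    (hp : ∀ y, charFnL p y = if y = 0 then 1 else c) : TECl p := by
  intro q hq habs
  have hp0 := charFnL_ne_zero_of_eq_ite ((inv_pos.mpr three_pos).trans hc).ne' hp
  set ε := fun y => charFnL q y / charFnL p y
  have hqε : ∀ y, charFnL q y = ε y * charFnL p y := fun y => (div_mul_cancel₀ _ (hp0 y)).symm
  have hε : ∀ y, ε y = 1 ∨ ε y = -1 := fun y => by
    rw [← abs_eq zero_le_one, abs_div, habs, div_self (abs_ne_zero.mpr (hp0 y))]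
  have hε0 : ε 0 = 1 := by simp [ε, charFnL_zero, hq.2, hp]
  refine (exists_comp_add_right_iff hp0 hqε).mpr
    (exists_pairingL_eq_of_charFnL_nonneg hε fun x => ?_)
  refine charFnL_nonneg_of_neg_two_lt hl hε ?_
  have hqx := two_pow_mul_eq_of_charFnL_eq (fun y => (hqε y).trans (by rw [hp])) x
  rw [hε0] at hqx
  nlinarith [mul_nonneg (pow_nonneg zero_le_two l : (0 : ℝ) ≤ 2 ^ l) (hq.1 x)]

lemma one_sub_le_two_pow_mul (hc : 0 ≤ c) (hp : ∀ y, charFnL p y = if y = 0 then 1 else c)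
    (x : Gl l) : 1 - c ≤ 2 ^ l * p x := by
  have hpx := two_pow_mul_eq_of_charFnL_eq (ε := fun _ => 1) (fun y => by rw [hp, one_mul]) x
  have hone : 0 ≤ charFnL (fun _ => (1 : ℝ)) x := by
    simp only [charFnL, mul_one, sum_pairingL_left]
    positivity
  nlinarith

lemma exists_isProbL_charFnL_eq_ite_mul (hc0 : 0 < c) (hc : c ≤ 3⁻¹)
    (hp : ∀ y, charFnL p y = if y = 0 then 1 else c) {y₀ : Gl l} (hy₀ : y₀ ≠ 0) :
    ∃ q, IsProbL q ∧ ∀ y, charFnL q y = (if y = y₀ then -1 else 1) * charFnL p y := by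
  set q := fun x => p x - 2 * c / 2 ^ l * pairingL x y₀
  have horth : ∀ y, ∑ x, pairingL x y * (2 * c / 2 ^ l * pairingL x y₀)
      = if y = y₀ then 2 * c else 0 := fun y => by
    simp_rw [mul_left_comm _ (2 * c / 2 ^ l), ← mul_sum, sum_pairingL_mul_pairingL]
    split_ifs
    · field_simp
    · simp
  have hq : ∀ y, charFnL q y = (if y = y₀ then -1 else 1) * charFnL p y := fun y => by
    have hsub : charFnL q y = charFnL p y - if y = y₀ then 2 * c else 0 := by
      simp only [q, charFnL, mul_sub, sum_sub_distrib, horth]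
    rw [hsub]
    split_ifs with h
    · rw [h, hp, if_neg hy₀]; ring
    · ring
  refine ⟨q, ⟨fun x => ?_, ?_⟩, hq⟩
  · have hpx := one_sub_le_two_pow_mul hc0.le hp x
    have hpow : (0 : ℝ) < 2 ^ l := by positivity
    have hq_mul : 2 ^ l * q x = 2 ^ l * p x - 2 * c * pairingL x y₀ := by
      simp only [q]; field_simp
    rcases pairingL_eq_one_or_eq_neg_one x y₀ with h | h <;> rw [h] at hq_mul <;> nlinarith
  · rw [← charFnL_zero, hq, if_neg hy₀.symm, hp, if_pos rfl, one_mul]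

theorem not_TECl_of_le_inv_three (hl : 2 ≤ l) (hc0 : 0 < c) (hc : c ≤ 3⁻¹)
    (hp : ∀ y, charFnL p y = if y = 0 then 1 else c) : ¬ TECl p := by
  intro hTEC
  obtain ⟨y₀, hy₀, -⟩ := Gl.exists_ne_zero_ne hl 0
  obtain ⟨q, hqprob, hq⟩ := exists_isProbL_charFnL_eq_ite_mul hc0 hc hp hy₀
  have habs : ∀ y, |charFnL q y| = |charFnL p y| := fun y => by
    rw [hq, abs_mul]; split_ifs <;> simp
  have hp0 := charFnL_ne_zero_of_eq_ite hc0.ne' hp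
  exact not_exists_pairingL_eq_ite hl y₀
    ((exists_comp_add_right_iff hp0 hq).mp (hTEC q hqprob habs))

end Poisson

lemma charFnL_eq_ite_of_eq_exp {l : ℕ} {lam : ℝ} {p : Gl l → ℝ}
    (hchar : ∀ y : Gl l,
      charFnL p y = Real.exp (∑ x : Gl l, (pairingL x y - 1) * (lam * (2 ^ l)⁻¹))) (y : Gl l) :
    charFnL p y = if y = 0 then 1 else Real.exp (-lam) := by
  rw [hchar, ← sum_mul, sum_sub_distrib, sum_pairingL_left]
  split_ifs
  · simp
  · rw [zero_sub, sum_const, card_univ, Gl.card_eq, nsmul_one]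
    push_cast
    field_simp

lemma inv_three_lt_exp_neg_iff {lam : ℝ} : 3⁻¹ < Real.exp (-lam) ↔ lam < Real.log 3 := by
  rw [← Real.log_lt_iff_lt_exp (by norm_num), Real.log_inv, neg_lt_neg_iff]

theorem stmt13_general (l : ℕ) (hl : 2 ≤ l) (lam : ℝ)
    (p : Gl l → ℝ)
    (hchar : ∀ y : Gl l,
      charFnL p y = Real.exp (∑ x : Gl l, (pairingL x y - 1) * (lam * (2 ^ l)⁻¹))) :
    TECl p ↔ lam < Real.log 3 := by
  have hp := charFnL_eq_ite_of_eq_exp hchar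
  rw [← inv_three_lt_exp_neg_iff]
  refine ⟨fun hTEC => ?_, fun hc => TECl_of_inv_three_lt (by omega) hc hp⟩
  by_contra hc
  exact not_TECl_of_le_inv_three hl (Real.exp_pos _) (not_lt.mp hc) hp hTEC

/-- Theorem 1: let `m` be the Haar probability measure on `G_l`
(`l ≥ 2`) and `λ > 0`. The generalized Poisson distribution `Π_{λm}` — the probability
measure whose characteristic function is `exp(Σ_x ((x,y) − 1)·λ·2^{-l})` — belongs to
`TEC(G_l)` if and only if `λ < ln 3`. -/
theorem stmt13 (l : ℕ) (hl : 2 ≤ l) (lam : ℝ) (hlam : 0 < lam)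
    (p : Gl l → ℝ) (hp : IsProbL p)
    (hchar : ∀ y : Gl l,
      charFnL p y = Real.exp (∑ x : Gl l, (pairingL x y - 1) * (lam * (2 ^ l)⁻¹))) :
    TECl p ↔ lam < Real.log 3 :=
  stmt13_general l hl lam p hchar
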